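/- arXiv:1706.05160 — 2 statements merged into one kernel-verified Lean document; each statement's English description precedes it below -/
import Mathlib

section
/- Let f be a holomorphic cusp form of weight r for a finite index subgroup of SL₂(ℤ) with Fourier coefficients a_k, so that |Im z|^{r/2}|f(z)| is bounded on the upper half plane. Then Σ_{k ≤ K} a_k = O(K^{r/2} log K) as K → ∞. -/
/-!
Fix a height `y > 0`. On the line `Im z = y` the expansion is an absolutely convergent
trigonometric series in `x = Re z`, so `a_k e^{-2πky}` is its `k`-th Fourier coefficient; summing
over `k ≤ K` gives `Σ_{k ≤ K} a_k = ∫₀¹ f(x + iy) D(x) dx` with `D(x) = Σ_{k=1}^K e^{2πk(y - ix)}`.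
Take `y = 1/K`: then `|f(x + iy)| ≤ B K^{r/2}`, while the weights `e^{2πky}` stay bounded, so
`|D(x)| ≪ min(K, 1/|sin πx|)`, whose integral over `[0, 1]` is `O(log K)`.
-/

open Complex Finset intervalIntegral
open scoped Real

lemma integral_exp_two_pi_I_int_mul (m : ℤ) :
    ∫ x in (0:ℝ)..1, cexp (2 * π * I * m * x) = if m = 0 then 1 else 0 := by
  split_ifs with hm
  · simp [hm]
  · have hc : 2 * π * I * m ≠ 0 := by simp [Real.pi_ne_zero, I_ne_zero, hm]
    have hexp : cexp (2 * π * I * m) = 1 := by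
      rw [show 2 * π * I * m = m * (2 * π * I) by ring]
      exact exp_int_mul_two_pi_mul_I m
    simp [integral_exp_mul_complex hc, hexp]

lemma norm_mul_exp_two_pi_I_int_mul (c : ℂ) (n : ℤ) (x : ℝ) :
    ‖c * cexp (2 * π * I * n * x)‖ = ‖c‖ := by
  rw [norm_mul, show 2 * π * I * n * x = ((2 * π * n * x : ℝ) : ℂ) * I by push_cast; ring,
    norm_exp_ofReal_mul_I, mul_one]

section FourierSeries

variable {ι : Type*} {ν : ι → ℤ} {c : ι → ℂ} {g : ℝ → ℂ}

lemma continuous_of_hasSum_exp (hc : Summable (‖c ·‖))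
    (hg : ∀ x : ℝ, HasSum (fun i => c i * cexp (2 * π * I * ν i * x)) (g x)) : Continuous g := by
  have hg' : g = fun x : ℝ => ∑' i, c i * cexp (2 * π * I * ν i * x) :=
    funext fun x => (hg x).tsum_eq.symm
  rw [hg']
  exact continuous_tsum (fun i => by fun_prop) hc
    (fun i x => (norm_mul_exp_two_pi_I_int_mul _ _ _).le)

lemma integral_mul_exp_neg_of_hasSum [Countable ι] (hν : Function.Injective ν)
    (hc : Summable (‖c ·‖))
    (hg : ∀ x : ℝ, HasSum (fun i => c i * cexp (2 * π * I * ν i * x)) (g x)) (j : ι) :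
    ∫ x in (0:ℝ)..1, g x * cexp (-(2 * π * I * ν j * x)) = c j := by
  set F : ι → ℝ → ℂ := fun i x =>
    c i * cexp (2 * π * I * ν i * x) * cexp (-(2 * π * I * ν j * x))
  have hF : ∀ i x, F i x = c i * cexp (2 * π * I * (ν i - ν j : ℤ) * x) := fun i x => by
    simp only [F]; rw [mul_assoc, ← Complex.exp_add]; push_cast; ring_nf
  have hsum : HasSum (fun i => ∫ x in (0:ℝ)..1, F i x)
      (∫ x in (0:ℝ)..1, g x * cexp (-(2 * π * I * ν j * x))) :=
    hasSum_integral_of_dominated_convergence (fun i _ => ‖c i‖) (fun i => by fun_prop)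
      (fun i => .of_forall fun x _ => by rw [hF, norm_mul_exp_two_pi_I_int_mul])
      (.of_forall fun _ _ => hc) intervalIntegrable_const
      (.of_forall fun x _ => (hg x).mul_right _)
  have horth : ∀ i, ∫ x in (0:ℝ)..1, F i x = if ν i = ν j then c i else 0 := fun i => by
    simp_rw [hF, integral_const_mul, integral_exp_two_pi_I_int_mul, sub_eq_zero]
    split_ifs <;> simp
  refine hsum.unique ?_
  convert hasSum_single j fun i hi => ?_ using 1
  · simp [horth]
  · simp [horth, hν.ne hi]

end FourierSeries

noncomputable def weightedDirichletKernel (K : ℕ) (y x : ℝ) : ℂ :=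
  ∑ k ∈ Icc 1 K, cexp (2 * π * (y - x * I)) ^ k

lemma continuous_weightedDirichletKernel (K : ℕ) (y : ℝ) :
    Continuous (weightedDirichletKernel K y) := by
  unfold weightedDirichletKernel
  fun_prop

lemma norm_exp_two_pi_mul_sub (y x : ℝ) : ‖cexp (2 * π * (y - x * I))‖ = rexp (2 * π * y) := by
  rw [norm_exp]
  congr 1
  simp

lemma norm_exp_two_pi_mul_sub_pow_le {y : ℝ} {k : ℕ} (hk : k * y ≤ 2) (x : ℝ) :
    ‖cexp (2 * π * (y - x * I)) ^ k‖ ≤ rexp (4 * π) := by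
  rw [norm_pow, norm_exp_two_pi_mul_sub, ← Real.exp_nat_mul, Real.exp_le_exp]
  nlinarith [Real.pi_pos]

lemma norm_sub_one_le_norm_mul_sub_one {u : ℂ} (hu : ‖u‖ = 1) {ρ : ℝ} (hρ : 1 ≤ ρ) :
    ‖u - 1‖ ≤ ‖ρ * u - 1‖ := by
  have hre : u.re ≤ 1 := (re_le_norm u).trans hu.le
  have hsq : u.re ^ 2 + u.im ^ 2 = 1 := by
    rw [← one_pow 2, ← hu, Complex.sq_norm, normSq_apply]
    ring
  rw [norm_def, norm_def]
  apply Real.sqrt_le_sqrt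
  simp only [normSq_apply, sub_re, sub_im, mul_re, mul_im, ofReal_re, ofReal_im, one_re, one_im]
  nlinarith [mul_nonneg (sub_nonneg.2 hρ) (by linarith : 0 ≤ ρ + 1 - 2 * u.re),
    congrArg (ρ ^ 2 * ·) hsq]

lemma two_mul_abs_sin_le_norm_exp_sub_one {y : ℝ} (hy : 0 ≤ y) (x : ℝ) :
    2 * |Real.sin (π * x)| ≤ ‖cexp (2 * π * (y - x * I)) - 1‖ := by
  have hpolar : cexp (2 * π * (y - x * I)) = rexp (2 * π * y) * cexp (I * (-(2 * π * x) : ℝ)) := by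
    rw [ofReal_exp, ← Complex.exp_add]; push_cast; ring_nf
  have hsin : ‖cexp (I * (-(2 * π * x) : ℝ)) - 1‖ = 2 * |Real.sin (π * x)| := by
    rw [norm_exp_I_mul_ofReal_sub_one, show -(2 * π * x) / 2 = -(π * x) by ring, Real.sin_neg,
      norm_mul, norm_neg, Real.norm_eq_abs, Real.norm_eq_abs, abs_two]
  rw [hpolar, ← hsin]
  exact norm_sub_one_le_norm_mul_sub_one (by rw [mul_comm]; exact norm_exp_ofReal_mul_I _)
    (Real.one_le_exp (by positivity))

lemma norm_geom_sum_Icc_le {w : ℂ} (hw : 1 ≤ ‖w‖) (hw1 : w ≠ 1) (K : ℕ) :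
    ‖∑ k ∈ Icc 1 K, w ^ k‖ ≤ 2 * ‖w‖ ^ (K + 1) / ‖w - 1‖ := by
  rw [← Finset.Ico_add_one_right_eq_Icc, geom_sum_Ico hw1 (by omega), norm_div]
  gcongr
  calc ‖w ^ (K + 1) - w ^ 1‖ ≤ ‖w ^ (K + 1)‖ + ‖w ^ 1‖ := norm_sub_le _ _
    _ ≤ 2 * ‖w‖ ^ (K + 1) := by
        rw [norm_pow, norm_pow]
        linarith [pow_le_pow_right₀ hw (show 1 ≤ K + 1 by omega)]

lemma norm_weightedDirichletKernel_le_mul {K : ℕ} {y : ℝ} (hK : (K + 1) * y ≤ 2)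
    (x : ℝ) : ‖weightedDirichletKernel K y x‖ ≤ rexp (4 * π) * K := by
  calc ‖weightedDirichletKernel K y x‖ ≤ ∑ k ∈ Icc 1 K, ‖cexp (2 * π * (y - x * I)) ^ k‖ :=
        norm_sum_le _ _
    _ ≤ ∑ k ∈ Icc 1 K, rexp (4 * π) := sum_le_sum fun k hk =>
        norm_exp_two_pi_mul_sub_pow_le (by
          have : (k : ℝ) ≤ K := by exact_mod_cast (mem_Icc.1 hk).2
          nlinarith) x
    _ = rexp (4 * π) * K := by simp [mul_comm]

lemma norm_weightedDirichletKernel_le_div {K : ℕ} {y : ℝ} (hy : 0 ≤ y) (hK : (K + 1) * y ≤ 2)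
    {x : ℝ} (hx : Real.sin (π * x) ≠ 0) :
    ‖weightedDirichletKernel K y x‖ ≤ rexp (4 * π) / |Real.sin (π * x)| := by
  set w := cexp (2 * π * (y - x * I))
  have hw1 : 2 * |Real.sin (π * x)| ≤ ‖w - 1‖ := two_mul_abs_sin_le_norm_exp_sub_one hy x
  have hpos : 0 < 2 * |Real.sin (π * x)| := by positivity
  calc ‖weightedDirichletKernel K y x‖ ≤ 2 * ‖w‖ ^ (K + 1) / ‖w - 1‖ :=
        norm_geom_sum_Icc_le
          (by rw [norm_exp_two_pi_mul_sub]; exact Real.one_le_exp (by positivity))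
          (sub_ne_zero.1 (norm_pos_iff.1 (hpos.trans_le hw1))) K
    _ ≤ 2 * rexp (4 * π) / (2 * |Real.sin (π * x)|) := by
        gcongr
        rw [← norm_pow]
        exact norm_exp_two_pi_mul_sub_pow_le (by push_cast; linarith) x
    _ = rexp (4 * π) / |Real.sin (π * x)| := by ring

lemma two_mul_le_sin_pi_mul {x : ℝ} (h0 : 0 ≤ x) (h1 : x ≤ 1 / 2) : 2 * x ≤ Real.sin (π * x) :=
  calc 2 * x = 2 / π * (π * x) := by field_simp
    _ ≤ Real.sin (π * x) := Real.mul_le_sin (by positivity) (by nlinarith [Real.pi_pos])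

lemma integral_le_of_le_mul_of_le_div {H : ℝ → ℝ} (hH : Continuous H) {K A : ℝ} (hK : 2 ≤ K)
    (h₁ : ∀ x ∈ Set.Icc 0 K⁻¹, H x ≤ A * K) (h₂ : ∀ x ∈ Set.Icc K⁻¹ (1 / 2), H x ≤ A / x) :
    ∫ x in (0:ℝ)..1 / 2, H x ≤ A * (1 + Real.log (K / 2)) := by
  have hK0 : 0 < K := by linarith
  have hKinv : K⁻¹ ≤ 1 / 2 := by rw [one_div]; exact inv_anti₀ two_pos hK
  rw [← integral_add_adjacent_intervals (hH.intervalIntegrable 0 K⁻¹)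
    (hH.intervalIntegrable K⁻¹ (1 / 2)), mul_add, mul_one]
  gcongr
  · calc ∫ x in (0:ℝ)..K⁻¹, H x ≤ ∫ x in (0:ℝ)..K⁻¹, A * K :=
          integral_mono_on (by positivity) (hH.intervalIntegrable _ _) intervalIntegrable_const h₁
      _ = A := by simp [hK0.ne']
  · have hinv : IntervalIntegrable (fun x => x⁻¹) MeasureTheory.volume K⁻¹ (1 / 2) := by
      refine intervalIntegrable_inv_iff.2 (Or.inr fun h => ?_)
      rw [Set.uIcc_of_le hKinv] at h
      exact (inv_pos.2 hK0).not_ge h.1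
    calc ∫ x in K⁻¹..1 / 2, H x ≤ ∫ x in K⁻¹..1 / 2, A * x⁻¹ :=
          integral_mono_on hKinv (hH.intervalIntegrable _ _) (hinv.const_mul A)
            fun x hx => (h₂ x hx).trans_eq (div_eq_mul_inv _ _)
      _ = A * Real.log (K / 2) := by
          rw [integral_const_mul, integral_inv_of_pos (by positivity) (by norm_num)]
          congr 2
          field_simp

lemma one_add_log_div_two_le {K : ℝ} (hK : 2 ≤ K) :
    1 + Real.log (K / 2) ≤ Real.log K / Real.log 2 := by
  have hlog2 : 0 < Real.log 2 := Real.log_pos one_lt_two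
  have hlogK : Real.log 2 ≤ Real.log K := Real.log_le_log two_pos hK
  rw [Real.log_div (by linarith) two_ne_zero, le_div_iff₀ hlog2]
  nlinarith [Real.log_two_lt_d9]

lemma integral_norm_weightedDirichletKernel_le {K : ℕ} (hK : 2 ≤ K) :
    ∫ x in (0:ℝ)..1, ‖weightedDirichletKernel K (K : ℝ)⁻¹ x‖ ≤
      2 * rexp (4 * π) / Real.log 2 * Real.log K := by
  have hK2 : (2:ℝ) ≤ K := by exact_mod_cast hK
  have hy : (0:ℝ) ≤ (K : ℝ)⁻¹ := by positivity
  have hKy : ((K : ℝ) + 1) * (K : ℝ)⁻¹ ≤ 2 := by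
    rw [add_mul, mul_inv_cancel₀ (by positivity), one_mul]
    linarith [inv_le_one_of_one_le₀ (by linarith : (1:ℝ) ≤ K)]
  set G := fun x => ‖weightedDirichletKernel K (K : ℝ)⁻¹ x‖
  have hG : Continuous G := (continuous_weightedDirichletKernel K _).norm
  -- `x ↦ 1 - x` swaps the halves of `[0, 1]` and preserves `|sin πx|`.
  have hreflect :
      ∫ x in (0:ℝ)..1, G x = (∫ x in (0:ℝ)..1 / 2, G x) + ∫ x in (0:ℝ)..1 / 2, G (1 - x) := by
    rw [← integral_add_adjacent_intervals (hG.intervalIntegrable 0 (1 / 2))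
      (hG.intervalIntegrable (1 / 2) 1), integral_comp_sub_left]
    norm_num
  have hmul : ∀ x, G x ≤ rexp (4 * π) * K := norm_weightedDirichletKernel_le_mul hKy
  have hdiv : ∀ x ∈ Set.Icc (K : ℝ)⁻¹ (1 / 2), ∀ x', |Real.sin (π * x')| = |Real.sin (π * x)| →
      G x' ≤ rexp (4 * π) / x := fun x hx x' hx' => by
    have hx0 : 0 < x := (inv_pos.2 (by linarith)).trans_le hx.1
    have hsin : x ≤ |Real.sin (π * x')| := by
      rw [hx']
      linarith [two_mul_le_sin_pi_mul hx0.le hx.2, le_abs_self (Real.sin (π * x))]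
    calc G x' ≤ rexp (4 * π) / |Real.sin (π * x')| :=
          norm_weightedDirichletKernel_le_div hy hKy (abs_pos.1 (hx0.trans_le hsin))
      _ ≤ rexp (4 * π) / x := by gcongr
  have hhalf := integral_le_of_le_mul_of_le_div hG hK2 (fun x _ => hmul x)
    fun x hx => hdiv x hx x rfl
  have hhalf' := integral_le_of_le_mul_of_le_div (H := fun x => G (1 - x))
    (hG.comp (continuous_sub_left 1)) hK2 (fun x _ => hmul _)
    fun x hx => hdiv x hx _ (by rw [mul_sub, mul_one, Real.sin_pi_sub])
  calc ∫ x in (0:ℝ)..1, G x ≤ 2 * rexp (4 * π) * (1 + Real.log (K / 2)) := by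
        rw [hreflect]; linarith
    _ ≤ 2 * rexp (4 * π) * (Real.log K / Real.log 2) := by
        gcongr; exact one_add_log_div_two_le hK2
    _ = 2 * rexp (4 * π) / Real.log 2 * Real.log K := by ring

def HasCuspExpansion (f : ℂ → ℂ) (a : ℕ → ℂ) : Prop :=
  ∀ z : ℂ, 0 < z.im → HasSum (fun k : ℕ => a (k + 1) * cexp (2 * π * I * (k + 1) * z)) (f z)

lemma norm_exp_two_pi_I_nat_succ_mul (n : ℕ) (z : ℂ) :
    ‖cexp (2 * π * I * (n + 1) * z)‖ = rexp (-(2 * π * (n + 1) * z.im)) := by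
  rw [norm_exp]
  congr 1
  simp [mul_re, mul_im]

namespace HasCuspExpansion

variable {f : ℂ → ℂ} {a : ℕ → ℂ}

lemma summable_norm_coeff_mul_exp (hf : HasCuspExpansion f a) {y : ℝ} (hy : 0 < y) :
    Summable fun n : ℕ => ‖a (n + 1) * rexp (-(2 * π * (n + 1) * y))‖ := by
  obtain ⟨M, hM⟩ : BddAbove (Set.range fun n : ℕ =>
      ‖a (n + 1) * cexp (2 * π * I * (n + 1) * (y / 2 * I))‖) :=
    (hf _ (by simpa using hy)).summable.tendsto_atTop_zero.norm.bddAbove_range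
  -- The terms at height `y / 2` are bounded, leaving the geometric factor `e^{-π(n+1)y}`.
  set r := rexp (-(π * y))
  have hr : r < 1 := Real.exp_lt_one_iff.2 (by nlinarith [Real.pi_pos])
  refine Summable.of_nonneg_of_le (fun _ => norm_nonneg _) (fun n => ?_)
    ((summable_geometric_of_lt_one (Real.exp_nonneg _) hr).mul_left (M * r))
  calc ‖a (n + 1) * rexp (-(2 * π * (n + 1) * y))‖
      = ‖a (n + 1) * cexp (2 * π * I * (n + 1) * (y / 2 * I))‖ * r ^ (n + 1) := by
        rw [norm_mul, norm_mul, norm_exp_two_pi_I_nat_succ_mul, norm_real,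
          Real.norm_of_nonneg (Real.exp_nonneg _), ← Real.exp_nat_mul, mul_assoc ‖a (n + 1)‖,
          ← Real.exp_add]
        congr 2
        simp
        ring
    _ ≤ M * r ^ (n + 1) := by gcongr; exact hM ⟨n, rfl⟩
    _ = M * r * r ^ n := by ring

lemma hasSum_horizontal_line (hf : HasCuspExpansion f a) {y : ℝ} (hy : 0 < y) (x : ℝ) :
    HasSum (fun n : ℕ => a (n + 1) * rexp (-(2 * π * (n + 1) * y)) *
      cexp (2 * π * I * ((n + 1 : ℕ) : ℤ) * x)) (f (x + y * I)) := by
  convert hf (x + y * I) (by simpa using hy) using 2 with n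
  rw [ofReal_exp, mul_assoc, ← Complex.exp_add]
  congr 2
  push_cast
  linear_combination -(2 * π * (n + 1) * y : ℂ) * I_sq

lemma continuous_horizontal_line (hf : HasCuspExpansion f a) {y : ℝ} (hy : 0 < y) :
    Continuous fun x : ℝ => f (x + y * I) :=
  continuous_of_hasSum_exp (hf.summable_norm_coeff_mul_exp hy) (hf.hasSum_horizontal_line hy)

lemma coeff_eq_integral (hf : HasCuspExpansion f a) {y : ℝ} (hy : 0 < y) (n : ℕ) :
    a (n + 1) = ∫ x in (0:ℝ)..1, f (x + y * I) * cexp (2 * π * (y - x * I)) ^ (n + 1) := by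
  have h := integral_mul_exp_neg_of_hasSum (fun m n h => by simpa using h)
    (hf.summable_norm_coeff_mul_exp hy) (hf.hasSum_horizontal_line hy) n
  calc a (n + 1) = a (n + 1) * rexp (-(2 * π * (n + 1) * y)) * rexp (2 * π * (n + 1) * y) := by
        rw [mul_assoc, ← ofReal_mul, ← Real.exp_add, neg_add_cancel, Real.exp_zero, ofReal_one,
          mul_one]
    _ = ∫ x in (0:ℝ)..1, f (x + y * I) * cexp (-(2 * π * I * ((n + 1 : ℕ) : ℤ) * x)) *
          rexp (2 * π * (n + 1) * y) := by
        rw [integral_mul_const, h]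
    _ = ∫ x in (0:ℝ)..1, f (x + y * I) * cexp (2 * π * (y - x * I)) ^ (n + 1) :=
        integral_congr fun x _ => by
          rw [mul_assoc, ofReal_exp, ← Complex.exp_add, ← Complex.exp_nat_mul]
          congr 2
          push_cast
          ring

lemma sum_coeff_eq_integral_mul_weightedDirichletKernel (hf : HasCuspExpansion f a) {y : ℝ}
    (hy : 0 < y) (K : ℕ) :
    ∑ k ∈ Icc 1 K, a k = ∫ x in (0:ℝ)..1, f (x + y * I) * weightedDirichletKernel K y x := by
  simp_rw [weightedDirichletKernel, mul_sum]
  rw [integral_finsetSum fun k _ => by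
    exact ((hf.continuous_horizontal_line hy).mul (by fun_prop)).intervalIntegrable _ _]
  refine sum_congr rfl fun k hk => ?_
  obtain ⟨n, rfl⟩ := Nat.exists_eq_add_of_le' (mem_Icc.1 hk).1
  exact hf.coeff_eq_integral hy n

end HasCuspExpansion

theorem cusp_form_coeff_sum_general (r : ℝ) (f : ℂ → ℂ) (a : ℕ → ℂ)
    (hexp : ∀ z : ℂ, 0 < z.im →
      HasSum (fun k : ℕ => a (k + 1) * Complex.exp (2 * Real.pi * I * (k + 1) * z)) (f z))
    (hbd : ∃ B : ℝ, ∀ z : ℂ, 0 < z.im → z.im ^ (r / 2) * ‖f z‖ ≤ B) :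
    ∃ C : ℝ, ∀ K : ℕ, 2 ≤ K →
      ‖∑ k ∈ Finset.Icc 1 K, a k‖ ≤ C * (K : ℝ) ^ (r / 2) * Real.log K := by
  obtain ⟨B, hB⟩ := hbd
  have hB0 : 0 ≤ B := (mul_nonneg (by simp) (norm_nonneg _)).trans (hB I (by simp))
  refine ⟨B * (2 * rexp (4 * π) / Real.log 2), fun K hK => ?_⟩
  have hK0 : (0:ℝ) < K := by positivity
  have hy : (0:ℝ) < (K : ℝ)⁻¹ := inv_pos.2 hK0
  have hline : ∀ x : ℝ, ‖f (x + (K : ℝ)⁻¹ * I)‖ ≤ B * (K : ℝ) ^ (r / 2) := fun x => by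
    have h := hB (x + (K : ℝ)⁻¹ * I) (by simpa using hy)
    rw [show (x + (K : ℝ)⁻¹ * I : ℂ).im = (K : ℝ)⁻¹ by simp, Real.inv_rpow hK0.le,
      inv_mul_le_iff₀ (by positivity)] at h
    exact h.trans_eq (mul_comm _ _)
  rw [HasCuspExpansion.sum_coeff_eq_integral_mul_weightedDirichletKernel hexp hy K]
  calc ‖∫ x in (0:ℝ)..1, f (x + (K : ℝ)⁻¹ * I) * weightedDirichletKernel K (K : ℝ)⁻¹ x‖
      ≤ ∫ x in (0:ℝ)..1, B * (K : ℝ) ^ (r / 2) * ‖weightedDirichletKernel K (K : ℝ)⁻¹ x‖ :=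
        norm_integral_le_of_norm_le zero_le_one (.of_forall fun x _ => by
          rw [norm_mul]; gcongr; exact hline x)
          ((continuous_weightedDirichletKernel K _).norm.intervalIntegrable _ _ |>.const_mul _)
    _ = B * (K : ℝ) ^ (r / 2) * ∫ x in (0:ℝ)..1, ‖weightedDirichletKernel K (K : ℝ)⁻¹ x‖ :=
        integral_const_mul _ _
    _ ≤ B * (K : ℝ) ^ (r / 2) * (2 * rexp (4 * π) / Real.log 2 * Real.log K) := by
        gcongr; exact integral_norm_weightedDirichletKernel_le hK
    _ = B * (2 * rexp (4 * π) / Real.log 2) * (K : ℝ) ^ (r / 2) * Real.log K := by ring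

/-- Partial sums of the Fourier coefficients of a holomorphic cusp form of weight `r`
(i.e. `f(z) = Σ_{k ≥ 1} a_k e^{2πikz}` with `(Im z)^{r/2} |f(z)|` bounded on the upper
half plane) satisfy `Σ_{k ≤ K} a_k = O(K^{r/2} log K)`. -/
theorem cusp_form_coeff_sum (r : ℝ) (f : ℂ → ℂ) (a : ℕ → ℂ)
    (hhol : DifferentiableOn ℂ f {z : ℂ | 0 < z.im})
    (hexp : ∀ z : ℂ, 0 < z.im →
      HasSum (fun k : ℕ => a (k + 1) * Complex.exp (2 * Real.pi * I * (k + 1) * z)) (f z))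
    (hbd : ∃ B : ℝ, ∀ z : ℂ, 0 < z.im → z.im ^ (r / 2) * ‖f z‖ ≤ B) :
    ∃ C : ℝ, ∀ K : ℕ, 2 ≤ K →
      ‖∑ k ∈ Finset.Icc 1 K, a k‖ ≤ C * (K : ℝ) ^ (r / 2) * Real.log K :=
  cusp_form_coeff_sum_general r f a hexp hbd
end

section
/- For even N = 2n, the eigenvalue counting function of the Laplacian on SO(2n) satisfies N(λ) = (1/(2^{n−1} n!)) Σ_{x ∈ ℤⁿ, ‖x‖² ≤ R²} m(x), where R² = λ + n(n−1)(2n−1)/6 and m(x) = (Π_{0 ≤ i < j ≤ n−1} (x_{n−j}² − x_{n−i}²)/(j² − i²))². -/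
open Finset

open scoped Classical

/-- Weyl's dimension formula multiplicity for SO(2n), as a function of
`x_j = b_j + n - j` (here `x` is 0-indexed, so `x_j` is `x (j-1)`):
`m(x) = (Π_{0 ≤ i < j ≤ n-1} (x_{n-j}² − x_{n-i}²)/(j² − i²))²`. -/
noncomputable def multSOeven (n : ℕ) (hn : 0 < n) (x : Fin n → ℤ) : ℝ :=
  (∏ i ∈ Finset.range n, ∏ j ∈ Finset.Ico (i + 1) n,
      (((x ⟨n - 1 - j, by omega⟩ : ℤ) : ℝ) ^ 2 - ((x ⟨n - 1 - i, by omega⟩ : ℤ) : ℝ) ^ 2) /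
        ((j : ℝ) ^ 2 - (i : ℝ) ^ 2)) ^ 2

/-!
The multiplicity is a constant times the square of the Vandermonde determinant of `(x_i²)_i`.
Hence it is invariant under permutations and sign changes of the coordinates, as is the ball,
and it vanishes unless the `|x_i|` are pairwise distinct. A point with distinct `|x_i|` is, in
exactly one way, a permutation of a point with `|x_1| > ⋯ > |x_n|` (`n!` choices), and such a
point arises in exactly one way from a point of the chamber `x_1 > ⋯ > x_{n-1} > |x_n|` by changing
the signs of its first `n - 1` coordinates (`2^{n-1}` choices): the sign of `x_n` is already free
in the chamber.
-/

open Function Matrix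

lemma prod_range_prod_Ico_eq_prod_prod_Ioi {M : Type*} [CommMonoid M] (k : ℕ) (g : ℕ → ℕ → M) :
    ∏ i ∈ range k, ∏ j ∈ Ico (i + 1) k, g i j = ∏ i : Fin k, ∏ j ∈ Ioi i, g i j := by
  rw [← Fin.prod_univ_eq_prod_range]
  refine prod_congr rfl fun i _ => ?_
  rw [Finset.Ico_add_one_left_eq_Ioo, ← Fin.map_valEmbedding_Ioi, prod_map]
  rfl

lemma sq_det_vandermonde_comp_perm {R : Type*} [CommRing R] {k : ℕ} (v : Fin k → R)
    (σ : Equiv.Perm (Fin k)) : (vandermonde (v ∘ σ)).det ^ 2 = (vandermonde v).det ^ 2 := by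
  rw [show vandermonde (v ∘ σ) = (vandermonde v).submatrix σ id from rfl, det_permute, mul_pow,
    ← Int.cast_pow, ← Units.val_pow_eq_pow_val, Int.units_sq, Units.val_one, Int.cast_one, one_mul]

lemma abs_units_smul_apply {ι : Type*} (s : ι → ℤˣ) (x : ι → ℤ) (i : ι) :
    |(s • x) i| = |x i| := by
  rcases Int.units_eq_one_or (s i) with h | h <;> simp [h]

lemma units_smul_units_smul {ι : Type*} (s : ι → ℤˣ) (x : ι → ℤ) : s • s • x = x := by
  rw [smul_smul, show s * s = 1 from funext fun i => Int.units_mul_self (s i), one_smul]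

theorem Tuple.sort_eq_of_strictMono_comp {α : Type*} [LinearOrder α] {k : ℕ} {f : Fin k → α}
    {σ : Equiv.Perm (Fin k)} (h : StrictMono (f ∘ σ)) : Tuple.sort f = σ :=
  (Tuple.eq_sort_iff.2 ⟨h.monotone, fun _ _ hij heq => absurd heq (h hij).ne⟩).symm

theorem sum_filter_injective_eq_factorial_nsmul_sum_filter_strictMono {γ α M : Type*}
    [LinearOrder α] [AddCommMonoid M] {k : ℕ} (κ : γ → α) (S : Finset (Fin k → γ))
    (hS : ∀ x ∈ S, ∀ σ : Equiv.Perm (Fin k), x ∘ σ ∈ S) (f : (Fin k → γ) → M)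
    (hf : ∀ x (σ : Equiv.Perm (Fin k)), f (x ∘ σ) = f x) :
    ∑ x ∈ S with Injective (κ ∘ x), f x = k.factorial • ∑ x ∈ S with StrictMono (κ ∘ x), f x := by
  calc ∑ x ∈ S with Injective (κ ∘ x), f x
      = ∑ p ∈ (univ : Finset (Equiv.Perm (Fin k))) ×ˢ {x ∈ S | StrictMono (κ ∘ x)},
          f (p.2 ∘ p.1.symm) := by
        refine (sum_nbij' (fun p => p.2 ∘ p.1.symm)
          (fun x => (Tuple.sort (κ ∘ x), x ∘ Tuple.sort (κ ∘ x))) ?_ ?_ ?_ ?_ ?_).symm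
        · rintro ⟨σ, z⟩ hz
          simp only [mem_product, mem_univ, true_and, mem_filter] at hz ⊢
          exact ⟨hS z hz.1 σ.symm, hz.2.injective.comp σ.symm.injective⟩
        · intro x hx
          simp only [mem_product, mem_univ, true_and, mem_filter] at hx ⊢
          exact ⟨hS x hx.1 _, (Tuple.monotone_sort _).strictMono_of_injective
            (hx.2.comp (Tuple.sort _).injective)⟩
        · rintro ⟨σ, z⟩ hz
          simp only [mem_product, mem_univ, true_and, mem_filter] at hz
          have hsort : Tuple.sort (κ ∘ z ∘ σ.symm) = σ :=
            Tuple.sort_eq_of_strictMono_comp (by simpa [comp_assoc] using hz.2)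
          simp [hsort, comp_assoc]
        · intro x _
          simp [comp_assoc]
        · intros
          rfl
    _ = ∑ _σ : Equiv.Perm (Fin k), ∑ x ∈ S with StrictMono (κ ∘ x), f x := by
        rw [sum_product]
        simp only [hf]
    _ = k.factorial • ∑ x ∈ S with StrictMono (κ ∘ x), f x := by
        rw [sum_const, card_univ, Fintype.card_perm, Fintype.card_fin]

def IsStrictlyDominant {n : ℕ} (x : Fin (n + 1) → ℤ) : Prop :=
  ∀ i : Fin n, |x i.succ| < x i.castSucc

namespace IsStrictlyDominant

variable {n : ℕ} {x : Fin (n + 1) → ℤ}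

lemma pos (hx : IsStrictlyDominant x) (i : Fin n) : 0 < x i.castSucc :=
  (abs_nonneg _).trans_lt (hx i)

lemma strictAnti_abs (hx : IsStrictlyDominant x) : StrictAnti fun i => |x i| :=
  Fin.strictAnti_iff_succ_lt.2 fun i => (hx i).trans_le (le_abs_self _)

end IsStrictlyDominant

def signUnit (t : ℤ) : ℤˣ := if t < 0 then -1 else 1

lemma signUnit_smul_self (t : ℤ) : signUnit t • t = |t| := by
  unfold signUnit
  split_ifs with ht
  · simp [abs_of_neg ht]
  · simp [abs_of_nonneg (not_lt.1 ht)]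

lemma signUnit_units_smul_of_pos (u : ℤˣ) {t : ℤ} (ht : 0 < t) : signUnit (u • t) = u := by
  rcases Int.units_eq_one_or u with rfl | rfl <;> simp [signUnit, ht, ht.le]

theorem sum_filter_strictAnti_abs_eq_two_pow_nsmul_sum_filter_isStrictlyDominant {n : ℕ}
    {M : Type*} [AddCommMonoid M] (S : Finset (Fin (n + 1) → ℤ))
    (hS : ∀ x ∈ S, ∀ s : Fin (n + 1) → ℤˣ, s • x ∈ S) (f : (Fin (n + 1) → ℤ) → M)
    (hf : ∀ x (s : Fin (n + 1) → ℤˣ), f (s • x) = f x) :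
    ∑ x ∈ S with StrictAnti (fun i => |x i|), f x =
      2 ^ n • ∑ x ∈ S with IsStrictlyDominant x, f x := by
  let signs (x : Fin (n + 1) → ℤ) : Fin n → ℤˣ := fun i => signUnit (x i.castSucc)
  let fixLast (s : Fin n → ℤˣ) : Fin (n + 1) → ℤˣ := Fin.snoc s 1
  calc ∑ x ∈ S with StrictAnti (fun i => |x i|), f x
      = ∑ p ∈ (univ : Finset (Fin n → ℤˣ)) ×ˢ {x ∈ S | IsStrictlyDominant x},
          f (fixLast p.1 • p.2) := by
        refine (sum_nbij' (fun p => fixLast p.1 • p.2) (fun x => (signs x, fixLast (signs x) • x))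
          ?_ ?_ ?_ ?_ ?_).symm
        · rintro ⟨s, y⟩ hy
          simp only [mem_product, mem_univ, true_and, mem_filter] at hy ⊢
          exact ⟨hS y hy.1 _, by simpa only [abs_units_smul_apply] using hy.2.strictAnti_abs⟩
        · intro x hx
          simp only [mem_product, mem_univ, true_and, mem_filter] at hx ⊢
          refine ⟨hS x hx.1 _, fun i => ?_⟩
          rw [abs_units_smul_apply]
          simp only [Pi.smul_apply', fixLast, signs, Fin.snoc_castSucc, signUnit_smul_self]
          exact Fin.strictAnti_iff_succ_lt.1 hx.2 i
        · rintro ⟨s, y⟩ hy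
          simp only [mem_product, mem_univ, true_and, mem_filter] at hy
          have hs : signs (fixLast s • y) = s := funext fun i => by
            simp only [signs, fixLast, Pi.smul_apply', Fin.snoc_castSucc,
              signUnit_units_smul_of_pos _ (hy.2.pos i)]
          simp only [hs, units_smul_units_smul]
        · intro x _
          exact units_smul_units_smul _ x
        · intros
          rfl
    _ = ∑ _s : Fin n → ℤˣ, ∑ x ∈ S with IsStrictlyDominant x, f x := by
        rw [sum_product]
        simp only [hf]
    _ = 2 ^ n • ∑ x ∈ S with IsStrictlyDominant x, f x := by
        rw [sum_const, card_univ, Fintype.card_fun, Fintype.card_units_int, Fintype.card_fin]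

lemma chain_iff_isStrictlyDominant {n : ℕ} (x : Fin (n + 1) → ℤ) :
    (∀ i : ℕ, ∀ h : i + 1 < n + 1,
      (if i + 1 = n + 1 - 1 then |x ⟨i + 1, by omega⟩| < x ⟨i, by omega⟩
        else x ⟨i + 1, by omega⟩ < x ⟨i, by omega⟩)) ↔ IsStrictlyDominant x := by
  constructor
  · intro h
    have key (d : ℕ) : ∀ i, (hi : i + 1 + d = n) → |x ⟨i + 1, by omega⟩| < x ⟨i, by omega⟩ := by
      induction d with
      | zero =>
        intro i hi
        have hlast := h i (by omega)
        rwa [if_pos (by omega)] at hlast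
      | succ d ih =>
        intro i hi
        have hstep := h i (by omega)
        rw [if_neg (by omega)] at hstep
        have hpos : 0 < x ⟨i + 1, by omega⟩ := (abs_nonneg _).trans_lt (ih (i + 1) (by omega))
        rwa [abs_of_pos hpos]
    exact fun i => key (n - 1 - i) i (by omega)
  · intro h i hi
    have hi' := h ⟨i, by omega⟩
    simp only [Fin.succ_mk, Fin.castSucc_mk] at hi'
    split_ifs
    · exact hi'
    · exact (le_abs_self _).trans_lt hi'

section Multiplicity

variable {n : ℕ} (hn : 0 < n)

lemma multSOeven_eq_sq_det_vandermonde (x : Fin n → ℤ) :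
    multSOeven n hn x = (vandermonde fun i => ((x i : ℤ) : ℝ) ^ 2).det ^ 2 /
      (∏ i ∈ range n, ∏ j ∈ Ico (i + 1) n, ((j : ℝ) ^ 2 - (i : ℝ) ^ 2)) ^ 2 := by
  simp only [multSOeven, prod_div_distrib, div_pow]
  rw [← sq_det_vandermonde_comp_perm _ Fin.revPerm, det_vandermonde,
    prod_range_prod_Ico_eq_prod_prod_Ioi]
  have hrev (j : Fin n) : (⟨n - 1 - j, by omega⟩ : Fin n) = j.rev := by ext; simp; omega
  simp only [hrev]
  rfl

lemma multSOeven_comp_perm (x : Fin n → ℤ) (σ : Equiv.Perm (Fin n)) :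
    multSOeven n hn (x ∘ σ) = multSOeven n hn x := by
  simp only [multSOeven_eq_sq_det_vandermonde]
  exact congrArg (· / _) (sq_det_vandermonde_comp_perm (fun i => ((x i : ℤ) : ℝ) ^ 2) σ)

lemma multSOeven_units_smul (x : Fin n → ℤ) (s : Fin n → ℤˣ) :
    multSOeven n hn (s • x) = multSOeven n hn x := by
  have hsq (i : Fin n) : (((s • x) i : ℤ) : ℝ) ^ 2 = ((x i : ℤ) : ℝ) ^ 2 := by
    exact_mod_cast (sq_eq_sq_iff_abs_eq_abs _ _).2 (abs_units_smul_apply s x i)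
  simp only [multSOeven_eq_sq_det_vandermonde, hsq]

lemma multSOeven_eq_zero_of_not_injective {x : Fin n → ℤ} (hx : ¬ Injective fun i => |x i|) :
    multSOeven n hn x = 0 := by
  obtain ⟨i, j, hij, hne⟩ := not_injective_iff.mp hx
  rw [multSOeven_eq_sq_det_vandermonde, det_vandermonde_eq_zero_iff.mpr, zero_pow two_ne_zero,
    zero_div]
  exact ⟨i, j, by exact_mod_cast (sq_eq_sq_iff_abs_eq_abs (x i) (x j)).2 hij, hne⟩

end Multiplicity

noncomputable def latticeBall (n : ℕ) (M : ℤ) (R : ℝ) : Finset (Fin n → ℤ) :=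
  (Fintype.piFinset fun _ : Fin n => Icc (-M) M).filter
    fun x => ∑ i, ((x i : ℤ) : ℝ) ^ 2 ≤ R ^ 2

section LatticeBall

variable {n : ℕ} {M : ℤ} {R : ℝ} {x : Fin n → ℤ}

lemma mem_latticeBall :
    x ∈ latticeBall n M R ↔ (∀ i, |x i| ≤ M) ∧ ∑ i, ((|x i| : ℤ) : ℝ) ^ 2 ≤ R ^ 2 := by
  simp [latticeBall, abs_le]

lemma comp_perm_mem_latticeBall (hx : x ∈ latticeBall n M R) (σ : Equiv.Perm (Fin n)) :
    x ∘ σ ∈ latticeBall n M R := by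
  rw [mem_latticeBall] at hx ⊢
  exact ⟨fun i => hx.1 (σ i), (Equiv.sum_comp σ fun i => ((|x i| : ℤ) : ℝ) ^ 2).trans_le hx.2⟩

lemma units_smul_mem_latticeBall (hx : x ∈ latticeBall n M R) (s : Fin n → ℤˣ) :
    s • x ∈ latticeBall n M R := by
  simpa only [mem_latticeBall, abs_units_smul_apply] using hx

lemma sum_latticeBall_multSOeven (hn : 0 < n + 1) (M : ℤ) (R : ℝ) :
    ∑ x ∈ latticeBall (n + 1) M R, multSOeven (n + 1) hn x = (n + 1).factorial • 2 ^ n •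
      ∑ x ∈ latticeBall (n + 1) M R with IsStrictlyDominant x, multSOeven (n + 1) hn x := by
  set B := latticeBall (n + 1) M R
  calc ∑ x ∈ B, multSOeven (n + 1) hn x
      = ∑ x ∈ B with Injective (OrderDual.toDual ∘ fun i => |x i|), multSOeven (n + 1) hn x :=
        (sum_filter_of_ne fun x _ hx => OrderDual.toDual.injective.comp
          (not_not.1 (mt (multSOeven_eq_zero_of_not_injective hn) hx))).symm
    _ = (n + 1).factorial • ∑ x ∈ B with StrictAnti (fun i => |x i|), multSOeven (n + 1) hn x :=
        sum_filter_injective_eq_factorial_nsmul_sum_filter_strictMono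
          (fun t => OrderDual.toDual |t|) B (fun _ hx σ => comp_perm_mem_latticeBall hx σ) _
          (multSOeven_comp_perm hn)
    _ = _ := by
        rw [sum_filter_strictAnti_abs_eq_two_pow_nsmul_sum_filter_isStrictlyDominant B
          (fun _ hx s => units_smul_mem_latticeBall hx s) _ (multSOeven_units_smul hn)]

end LatticeBall

/-- Lattice sum expression for the eigenvalue counting function of the Laplacian on
`SO(2n)`: eigenvalues are indexed by `x_1 > x_2 > ⋯ > x_{n-1} > |x_n|` (coming from
highest weights `b_1 ≥ ⋯ ≥ |b_n|` via `x_j = b_j + n - j`) with eigenvalue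
`Σ x_j² − n(n−1)(2n−1)/6` and multiplicity `m(x)`; then
`N(λ) = (1/(2^{n-1} n!)) Σ_{x ∈ ℤⁿ, ‖x‖² ≤ R²} m(x)` with
`R² = λ + n(n−1)(2n−1)/6`. -/
theorem weyl_lattice_sum_SOeven (n : ℕ) (hn : 0 < n) (R : ℝ) :
    (∑ x ∈ (Fintype.piFinset fun _ : Fin n =>
          Finset.Icc (-(⌊R⌋₊ : ℤ)) (⌊R⌋₊ : ℤ)).filter
        (fun x => (∀ i : ℕ, ∀ h : i + 1 < n,
            (if i + 1 = n - 1 then |x ⟨i + 1, by omega⟩| < x ⟨i, by omega⟩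
              else x ⟨i + 1, by omega⟩ < x ⟨i, by omega⟩)) ∧
          ∑ i, ((x i : ℤ) : ℝ) ^ 2 ≤ R ^ 2),
        multSOeven n hn x)
      = (1 / ((2 : ℝ) ^ (n - 1) * (n.factorial : ℝ))) *
        ∑ x ∈ (Fintype.piFinset fun _ : Fin n =>
            Finset.Icc (-(⌊R⌋₊ : ℤ)) (⌊R⌋₊ : ℤ)).filter
          (fun x => ∑ i, ((x i : ℤ) : ℝ) ^ 2 ≤ R ^ 2),
          multSOeven n hn x := by
  obtain ⟨k, rfl⟩ := Nat.exists_eq_add_one_of_ne_zero hn.ne'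
  calc _ = ∑ x ∈ latticeBall (k + 1) ⌊R⌋₊ R with IsStrictlyDominant x, multSOeven (k + 1) hn x := by
        simp only [latticeBall, filter_filter, chain_iff_isStrictlyDominant, and_comm]
    _ = _ := by
        change _ = _ * ∑ x ∈ latticeBall (k + 1) ⌊R⌋₊ R, multSOeven (k + 1) hn x
        rw [sum_latticeBall_multSOeven, Nat.add_sub_cancel, smul_smul, nsmul_eq_mul]
        push_cast
        field_simp
end
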